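/- Let B be a bialgebra such that B^op is a Hopf algebra, i.e., there is S: B → B with Σ S(b₍₂₎)b₍₁₎ = Σ b₍₂₎S(b₍₁₎) = ε(b)·1. Let A be a right B-comodule algebra and C a right B-module coalgebra. Then the entwining map ψ(c⊗a) = Σ a₍₀₎ ⊗ c·a₍₁₎ is bijective, with inverse ψ⁻¹(a⊗c) = Σ c·S(a₍₁₎) ⊗ a₍₀₎. -/
import Mathlib


open TensorProduct LinearMap

set_option maxHeartbeats 1000000 in
set_option synthInstance.maxHeartbeats 400000 in
/-- Let `B` be a bialgebra such that `B^op` is a Hopf algebra, i.e. there is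
`S : B → B` with `Σ S(b₍₂₎)b₍₁₎ = Σ b₍₂₎S(b₍₁₎) = ε(b)·1`. For a right `B`-comodule algebra
`A` and a right `B`-module coalgebra `C`, the entwining map `ψ(c⊗a) = Σ a₍₀₎ ⊗ c·a₍₁₎` is
bijective, with inverse `ψ⁻¹(a⊗c) = Σ c·S(a₍₁₎) ⊗ a₍₀₎`. -/
theorem stmt10 (k B A C : Type*) [Field k]
    [Ring B] [Bialgebra k B]
    [Ring A] [Algebra k A]
    [AddCommGroup C] [Module k C] [Coalgebra k C]
    -- the coaction of B on A, making A a right B-comodule algebra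
    (ρ : A →ₗ[k] A ⊗[k] B)
    (hρ1 : ρ 1 = 1)
    (hρmul : ∀ a b : A, ρ (a * b) = ρ a * ρ b)
    (hρcoassoc : ∀ a : A,
      (Coalgebra.comul (R := k) (A := B)).lTensor A (ρ a) =
        (TensorProduct.assoc k A B B) (ρ.rTensor B (ρ a)))
    (hρcounit : ∀ a : A,
      (Coalgebra.counit (R := k) (A := B)).lTensor A (ρ a) = a ⊗ₜ[k] (1 : k))
    -- the right action of B on C, making C a right B-module coalgebra
    (act : C →ₗ[k] B →ₗ[k] C)
    (hact1 : ∀ c : C, act c 1 = c)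
    (hactmul : ∀ (c : C) (b b' : B), act (act c b) b' = act c (b * b'))
    (hactcomul : ∀ (c : C) (b : B),
      Coalgebra.comul (R := k) (act c b) =
        (TensorProduct.map (TensorProduct.lift act) (TensorProduct.lift act))
          ((TensorProduct.tensorTensorTensorComm k C C B B)
            (Coalgebra.comul (R := k) c ⊗ₜ[k] Coalgebra.comul (R := k) b)))
    (hactcounit : ∀ (c : C) (b : B),
      Coalgebra.counit (R := k) (act c b) =
        Coalgebra.counit (R := k) c * Coalgebra.counit (R := k) b)
    -- S is an antipode for B^op : Σ S(b₍₂₎)b₍₁₎ = ε(b)1 = Σ b₍₂₎S(b₍₁₎)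
    (S : B →ₗ[k] B)
    (hS1 : ∀ b : B, (LinearMap.mul' k B) ((TensorProduct.comm k B B)
        ((TensorProduct.map LinearMap.id S) (Coalgebra.comul (R := k) b))) =
      Coalgebra.counit (R := k) b • (1 : B))
    (hS2 : ∀ b : B, (LinearMap.mul' k B) ((TensorProduct.comm k B B)
        ((TensorProduct.map S LinearMap.id) (Coalgebra.comul (R := k) b))) =
      Coalgebra.counit (R := k) b • (1 : B))
    -- the entwining map ψ(c⊗a) = Σ a₍₀₎ ⊗ c·a₍₁₎
    (ψ : C ⊗[k] A →ₗ[k] A ⊗[k] C)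
    (hψdef : ∀ (c : C) (a : A), ψ (c ⊗ₜ[k] a) = (act c).lTensor A (ρ a))
    -- the candidate inverse φ(a⊗c) = Σ c·S(a₍₁₎) ⊗ a₍₀₎
    (φ : A ⊗[k] C →ₗ[k] C ⊗[k] A)
    (hφdef : ∀ (a : A) (c : C), φ (a ⊗ₜ[k] c) =
      (TensorProduct.comm k A C) (((act c) ∘ₗ S).lTensor A (ρ a))) :
    ψ ∘ₗ φ = LinearMap.id ∧ φ ∘ₗ ψ = LinearMap.id := by
  constructor
  · apply TensorProduct.ext'
    intro a c
    set g : B ⊗[k] B →ₗ[k] C :=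
      (act c) ∘ₗ (LinearMap.mul' k B) ∘ₗ (TensorProduct.comm k B B).toLinearMap ∘ₗ
        (TensorProduct.map LinearMap.id S) with hg
    have hgtmul : ∀ b₁ b₂ : B, g (b₁ ⊗ₜ[k] b₂) = act c (S b₂ * b₁) := by
      intro b₁ b₂
      simp [hg, LinearMap.mul'_apply]
    have hgΔ : ∀ b : B, g (Coalgebra.comul (R := k) b) = Coalgebra.counit (R := k) b • c := by
      intro b
      have h := hS1 b
      simp only [hg, coe_comp, Function.comp_apply, LinearEquiv.coe_coe]
      rw [h, map_smul, hact1]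
    have claim1 : ∀ y : A ⊗[k] B,
        ψ ((TensorProduct.comm k A C) ((LinearMap.lTensor A ((act c) ∘ₗ S)) y)) =
          (LinearMap.lTensor A g) ((TensorProduct.assoc k A B B) (ρ.rTensor B y)) := by
      intro y
      induction y using TensorProduct.induction_on with
      | zero => simp only [map_zero]
      | tmul a' b =>
        simp only [lTensor_tmul, comm_tmul, rTensor_tmul, coe_comp, Function.comp_apply]
        rw [hψdef]
        generalize ρ a' = z
        induction z using TensorProduct.induction_on with
        | zero => simp only [map_zero, TensorProduct.zero_tmul]
        | tmul a₀ b₁ =>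
          simp only [lTensor_tmul, TensorProduct.assoc_tmul, hgtmul, hactmul]
        | add u v hu hv =>
          simp only [map_add, TensorProduct.add_tmul, hu, hv]
      | add u v hu hv => simp only [map_add, hu, hv]
    have claim2 : ∀ y : A ⊗[k] B,
        (LinearMap.lTensor A g) ((Coalgebra.comul (R := k) (A := B)).lTensor A y) =
          (LinearMap.lTensor A (LinearMap.toSpanSingleton k C c))
            ((Coalgebra.counit (R := k) (A := B)).lTensor A y) := by
      intro y
      induction y using TensorProduct.induction_on with
      | zero => simp only [map_zero]
      | tmul a' b => simp [hgΔ, LinearMap.toSpanSingleton_apply]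
      | add u v hu hv => simp only [map_add, hu, hv]
    have : ψ (φ (a ⊗ₜ[k] c)) = a ⊗ₜ[k] c := by
      rw [hφdef, claim1 (ρ a), ← hρcoassoc a, claim2 (ρ a), hρcounit a]
      simp [LinearMap.toSpanSingleton_apply]
    simpa using this
  · apply TensorProduct.ext'
    intro c a
    set g : B ⊗[k] B →ₗ[k] C :=
      (act c) ∘ₗ (LinearMap.mul' k B) ∘ₗ (TensorProduct.comm k B B).toLinearMap ∘ₗ
        (TensorProduct.map S LinearMap.id) with hg
    have hgtmul : ∀ b₁ b₂ : B, g (b₁ ⊗ₜ[k] b₂) = act c (b₂ * S b₁) := by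
      intro b₁ b₂
      simp [hg, LinearMap.mul'_apply]
    have hgΔ : ∀ b : B, g (Coalgebra.comul (R := k) b) = Coalgebra.counit (R := k) b • c := by
      intro b
      have h := hS2 b
      simp only [hg, coe_comp, Function.comp_apply, LinearEquiv.coe_coe]
      rw [h, map_smul, hact1]
    have claim1 : ∀ y : A ⊗[k] B,
        φ ((LinearMap.lTensor A (act c)) y) =
          (TensorProduct.comm k A C)
            ((LinearMap.lTensor A g) ((TensorProduct.assoc k A B B) (ρ.rTensor B y))) := by
      intro y
      induction y using TensorProduct.induction_on with
      | zero => simp only [map_zero]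
      | tmul a' b =>
        simp only [lTensor_tmul, rTensor_tmul]
        rw [hφdef]
        generalize ρ a' = z
        induction z using TensorProduct.induction_on with
        | zero => simp only [map_zero, TensorProduct.zero_tmul]
        | tmul a₀ b₁ =>
          simp only [lTensor_tmul, TensorProduct.assoc_tmul, hgtmul, comm_tmul,
            coe_comp, Function.comp_apply, hactmul]
        | add u v hu hv =>
          simp only [map_add, TensorProduct.add_tmul, hu, hv]
      | add u v hu hv => simp only [map_add, hu, hv]
    have claim2 : ∀ y : A ⊗[k] B,
        (LinearMap.lTensor A g) ((Coalgebra.comul (R := k) (A := B)).lTensor A y) =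
          (LinearMap.lTensor A (LinearMap.toSpanSingleton k C c))
            ((Coalgebra.counit (R := k) (A := B)).lTensor A y) := by
      intro y
      induction y using TensorProduct.induction_on with
      | zero => simp only [map_zero]
      | tmul a' b => simp [hgΔ, LinearMap.toSpanSingleton_apply]
      | add u v hu hv => simp only [map_add, hu, hv]
    have : φ (ψ (c ⊗ₜ[k] a)) = c ⊗ₜ[k] a := by
      rw [hψdef, claim1 (ρ a), ← hρcoassoc a, claim2 (ρ a), hρcounit a]
      simp [LinearMap.toSpanSingleton_apply]
    simpa using this
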